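/- Positivity of the explicit Euler step for truncated data: let ν > 0, R > 0, let f ≥ 0 be integrable on ℝ^d with 𝔐₀[f·χ_R] > 0, and set f_R = χ_R·f, where χ_R is the indicator of the ball of radius R centered at the origin. Then for every h with 0 < h < 1/(2(4R + 2νR²)), the function w_R = f + h·(Q[f_R] − 2ν|k|² f_R) is nonnegative pointwise on ℝ^d. -/

import Mathlib

/-!
Since `L ≤ 1/Γ` and `2|k₁||k₂| ≤ Γ/𝔐₀[g]`, the kernel satisfies `|V_{k,k₁,k₂}|² L ≤ |k|/(2𝔐₀[g])`,
and by symmetry the same with `|k₁|` in place of `|k|`. Discarding the nonnegative gain terms, each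
of the two integrals in `Q[g](k)` then loses at most `|k| g(k)`, so `Q[g](k) ≥ -2|k| g(k)`.
For `g = f_R` this gives `Q[f_R] - 2ν|k|² f_R ≥ -(2R + 2νR²) f_R ≥ -(2R + 2νR²) f`, and the step
size condition makes `h (2R + 2νR²) ≤ 1`.
-/

noncomputable section
open MeasureTheory Filter Set Real

abbrev Sp (d : ℕ) : Type := EuclideanSpace ℝ (Fin d)

/-- Dispersion relation ω_k = √(λ1 + λ2 |k|²). -/
def omg (l1 l2 : ℝ) {d : ℕ} (k : Sp d) : ℝ := Real.sqrt (l1 + l2 * ‖k‖ ^ 2)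

/-- Zeroth moment 𝔐₀[f] = ∫ f. -/
def M0 {d : ℕ} (f : Sp d → ℝ) : ℝ := ∫ k, f k

/-- Resonance broadening Γ_{k,k1,k2}[f]. -/
def Gam {d : ℕ} (f : Sp d → ℝ) (k k1 k2 : Sp d) : ℝ :=
  (‖k‖ ^ 2 + ‖k1‖ ^ 2 + ‖k2‖ ^ 2) * M0 f

/-- Lorentzian L_f(ζ; k,k1,k2) = Γ/(ζ² + Γ²). -/
def Lor {d : ℕ} (f : Sp d → ℝ) (z : ℝ) (k k1 k2 : Sp d) : ℝ :=
  Gam f k k1 k2 / (z ^ 2 + Gam f k k1 k2 ^ 2)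

/-- Collision kernel |V_{k,k1,k2}|² = |k||k1||k2|. -/
def Vsq {d : ℕ} (k k1 k2 : Sp d) : ℝ := ‖k‖ * ‖k1‖ * ‖k2‖

/-- Collision operator Q[f] after eliminating the Dirac delta enforcing k = k1 + k2. -/
def Qop (l1 l2 : ℝ) {d : ℕ} (f : Sp d → ℝ) (k : Sp d) : ℝ :=
  (∫ k1, Vsq k k1 (k - k1) *
      Lor f (omg l1 l2 k - omg l1 l2 k1 - omg l1 l2 (k - k1)) k k1 (k - k1) *
      (f k1 * f (k - k1) - f k * f k1 - f k * f (k - k1)))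
  - 2 * ∫ k2, Vsq (k + k2) k k2 *
      Lor f (omg l1 l2 (k + k2) - omg l1 l2 k - omg l1 l2 k2) (k + k2) k k2 *
      (f k * f k2 - f k * f (k + k2) - f (k + k2) * f k2)

/-- Weighted L¹ norm ‖g‖_{L¹_N} = ∫ |g| ω^N. -/
def wnorm (l1 l2 N : ℝ) {d : ℕ} (g : Sp d → ℝ) : ℝ := ∫ k, |g k| * omg l1 l2 k ^ N

/-- N-th moment 𝔐_N[g] = ∫ ω^N g. -/
def Mom (l1 l2 N : ℝ) {d : ℕ} (g : Sp d → ℝ) : ℝ := ∫ k, omg l1 l2 k ^ N * g k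

/-- `∫ φ ∂μ = 0` when `φ` is not integrable; the sign condition on `∫ ψ ∂μ` covers that case. -/
lemma integral_le_integral_of_le_of_integral_nonpos {α : Type*} [MeasurableSpace α]
    {μ : Measure α} {ψ φ : α → ℝ} (hψ : Integrable ψ μ) (hle : ∀ x, ψ x ≤ φ x)
    (hψ0 : ∫ x, ψ x ∂μ ≤ 0) : ∫ x, ψ x ∂μ ≤ ∫ x, φ x ∂μ := by
  by_cases hφ : Integrable φ μ
  · exact integral_mono hψ hφ hle
  · rwa [integral_undef hφ]

lemma integral_le_integral_of_le_of_integral_nonneg {α : Type*} [MeasurableSpace α]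
    {μ : Measure α} {φ χ : α → ℝ} (hχ : Integrable χ μ) (hle : ∀ x, φ x ≤ χ x)
    (hχ0 : 0 ≤ ∫ x, χ x ∂μ) : ∫ x, φ x ∂μ ≤ ∫ x, χ x ∂μ := by
  by_cases hφ : Integrable φ μ
  · exact integral_mono hφ hχ hle
  · rwa [integral_undef hφ]

section Kernel

variable {d : ℕ}

lemma Vsq_nonneg (k k1 k2 : Sp d) : 0 ≤ Vsq k k1 k2 := by
  unfold Vsq; positivity

lemma Vsq_swap (k k1 k2 : Sp d) : Vsq k1 k k2 = Vsq k k1 k2 := by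
  unfold Vsq; ring

lemma Gam_nonneg {g : Sp d → ℝ} (hM : 0 ≤ M0 g) (k k1 k2 : Sp d) : 0 ≤ Gam g k k1 k2 := by
  unfold Gam; positivity

lemma Lor_swap (g : Sp d → ℝ) (z : ℝ) (k k1 k2 : Sp d) :
    Lor g z k1 k k2 = Lor g z k k1 k2 := by
  unfold Lor Gam; ring_nf

lemma Lor_nonneg {g : Sp d → ℝ} (hM : 0 ≤ M0 g) (z : ℝ) (k k1 k2 : Sp d) :
    0 ≤ Lor g z k k1 k2 := by
  have := Gam_nonneg hM k k1 k2
  unfold Lor; positivity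

lemma Lor_le_inv_Gam {g : Sp d → ℝ} (hM : 0 ≤ M0 g) (z : ℝ) (k k1 k2 : Sp d) :
    Lor g z k k1 k2 ≤ (Gam g k k1 k2)⁻¹ := by
  unfold Lor
  rcases (Gam_nonneg hM k k1 k2).eq_or_lt with hG | hG
  · simp [← hG]
  · rw [div_le_iff₀ (by positivity), mul_add, sq (Gam g k k1 k2), inv_mul_cancel_left₀ hG.ne']
    have : 0 ≤ (Gam g k k1 k2)⁻¹ * z ^ 2 := by positivity
    linarith

lemma Vsq_mul_Lor_le {g : Sp d → ℝ} (hM : 0 < M0 g) (z : ℝ) (k k1 k2 : Sp d) :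
    Vsq k k1 k2 * Lor g z k k1 k2 ≤ ‖k‖ / (2 * M0 g) := by
  calc Vsq k k1 k2 * Lor g z k k1 k2 ≤ Vsq k k1 k2 * (Gam g k k1 k2)⁻¹ :=
        mul_le_mul_of_nonneg_left (Lor_le_inv_Gam hM.le z k k1 k2) (Vsq_nonneg k k1 k2)
    _ ≤ ‖k‖ / (2 * M0 g) := by
        rcases (Gam_nonneg hM.le k k1 k2).eq_or_lt with hG | hG
        · rw [← hG, inv_zero, mul_zero]; positivity
        rw [← div_eq_mul_inv, div_le_div_iff₀ hG (by positivity)]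
        unfold Vsq Gam
        nlinarith [mul_nonneg (mul_nonneg (norm_nonneg k) hM.le) (sq_nonneg (‖k1‖ - ‖k2‖)),
          mul_nonneg (mul_nonneg (norm_nonneg k) hM.le) (sq_nonneg ‖k‖)]

lemma Vsq_mul_Lor_le' {g : Sp d → ℝ} (hM : 0 < M0 g) (z : ℝ) (k k1 k2 : Sp d) :
    Vsq k k1 k2 * Lor g z k k1 k2 ≤ ‖k1‖ / (2 * M0 g) := by
  rw [← Vsq_swap, ← Lor_swap]
  exact Vsq_mul_Lor_le hM z k1 k k2

end Kernel

section Collision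

variable {d : ℕ} (l1 l2 : ℝ) {g : Sp d → ℝ}

lemma neg_norm_mul_le_integral_first (hg : ∀ k, 0 ≤ g k) (hgi : Integrable g) (hM : 0 < M0 g)
    (k : Sp d) :
    -(‖k‖ * g k) ≤ ∫ k1, Vsq k k1 (k - k1) *
      Lor g (omg l1 l2 k - omg l1 l2 k1 - omg l1 l2 (k - k1)) k k1 (k - k1) *
      (g k1 * g (k - k1) - g k * g k1 - g k * g (k - k1)) := by
  have hψi : Integrable fun k1 => -(‖k‖ / (2 * M0 g) * g k) * (g k1 + g (k - k1)) :=
    (hgi.add (hgi.comp_sub_left k)).const_mul _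
  have hψ : ∫ k1, -(‖k‖ / (2 * M0 g) * g k) * (g k1 + g (k - k1)) = -(‖k‖ * g k) := by
    rw [integral_const_mul, integral_add hgi (hgi.comp_sub_left k),
      integral_sub_left_eq_self g volume k]
    change -(‖k‖ / (2 * M0 g) * g k) * (M0 g + M0 g) = _
    field_simp
    ring
  rw [← hψ]
  refine integral_le_integral_of_le_of_integral_nonpos hψi (fun k1 => ?_)
    (by rw [hψ]; exact neg_nonpos.mpr (mul_nonneg (norm_nonneg k) (hg k)))
  have hkernel_nonneg := mul_nonneg (Vsq_nonneg k k1 (k - k1)) (Lor_nonneg hM.le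
    (omg l1 l2 k - omg l1 l2 k1 - omg l1 l2 (k - k1)) k k1 (k - k1))
  have hkernel_le := Vsq_mul_Lor_le hM (omg l1 l2 k - omg l1 l2 k1 - omg l1 l2 (k - k1)) k k1 (k - k1)
  have hloss : 0 ≤ g k * (g k1 + g (k - k1)) := mul_nonneg (hg k) (add_nonneg (hg k1) (hg _))
  nlinarith [mul_le_mul_of_nonneg_right hkernel_le hloss, mul_nonneg hkernel_nonneg (mul_nonneg (hg k1) (hg (k - k1)))]

lemma integral_second_le_half_norm_mul (hg : ∀ k, 0 ≤ g k) (hgi : Integrable g) (hM : 0 < M0 g) (k : Sp d) :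
    (∫ k2, Vsq (k + k2) k k2 *
      Lor g (omg l1 l2 (k + k2) - omg l1 l2 k - omg l1 l2 k2) (k + k2) k k2 *
      (g k * g k2 - g k * g (k + k2) - g (k + k2) * g k2)) ≤ ‖k‖ * g k / 2 := by
  have hχ : ∫ k2, ‖k‖ / (2 * M0 g) * g k * g k2 = ‖k‖ * g k / 2 := by
    rw [integral_const_mul]
    change ‖k‖ / (2 * M0 g) * g k * M0 g = _
    field_simp
  rw [← hχ]
  refine integral_le_integral_of_le_of_integral_nonneg (hgi.const_mul _) (fun k2 => ?_)
    (by rw [hχ]; exact div_nonneg (mul_nonneg (norm_nonneg k) (hg k)) zero_le_two)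
  have hkernel_nonneg := mul_nonneg (Vsq_nonneg (k + k2) k k2) (Lor_nonneg hM.le
    (omg l1 l2 (k + k2) - omg l1 l2 k - omg l1 l2 k2) (k + k2) k k2)
  have hkernel_le := Vsq_mul_Lor_le' hM (omg l1 l2 (k + k2) - omg l1 l2 k - omg l1 l2 k2) (k + k2) k k2
  have hloss : 0 ≤ g k * g (k + k2) + g (k + k2) * g k2 :=
    add_nonneg (mul_nonneg (hg k) (hg _)) (mul_nonneg (hg _) (hg k2))
  nlinarith [mul_le_mul_of_nonneg_right hkernel_le (mul_nonneg (hg k) (hg k2)), mul_nonneg hkernel_nonneg hloss]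

theorem neg_two_norm_mul_le_Qop (hg : ∀ k, 0 ≤ g k) (hgi : Integrable g) (hM : 0 < M0 g)
    (k : Sp d) : -(2 * ‖k‖ * g k) ≤ Qop l1 l2 g k := by
  have h1 := neg_norm_mul_le_integral_first l1 l2 hg hgi hM k
  have h2 := integral_second_le_half_norm_mul l1 l2 hg hgi hM k
  unfold Qop
  linarith

end Collision

lemma norm_pow_mul_indicator_ball_le {E : Type*} [SeminormedAddCommGroup E] {R : ℝ}
    {f : E → ℝ} {k : E} (hf : 0 ≤ f k) (n : ℕ) :
    ‖k‖ ^ n * (Metric.ball (0 : E) R).indicator f k ≤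
      R ^ n * (Metric.ball (0 : E) R).indicator f k := by
  by_cases hk : k ∈ Metric.ball (0 : E) R
  · rw [indicator_of_mem hk]
    have := mem_ball_zero_iff.mp hk
    gcongr
  · simp [indicator_of_notMem hk]

theorem euler_step_positivity_general {d : ℕ} (l1 l2 ν R : ℝ) (hν : 0 < ν) (hR : 0 < R)
    (f : Sp d → ℝ) (hf : ∀ k, 0 ≤ f k)
    (hfi : Integrable f)
    (hM : 0 < M0 (Set.indicator (Metric.ball (0 : Sp d) R) f))
    (h : ℝ) (hh0 : 0 < h) (hh : h < 1 / (2 * (4 * R + 2 * ν * R ^ 2))) :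
    ∀ k : Sp d,
      0 ≤ f k + h * (Qop l1 l2 (Set.indicator (Metric.ball (0 : Sp d) R) f) k -
        2 * ν * ‖k‖ ^ 2 * Set.indicator (Metric.ball (0 : Sp d) R) f k) := by
  intro k
  set g := Set.indicator (Metric.ball (0 : Sp d) R) f
  have hg : ∀ k, 0 ≤ g k := indicator_nonneg fun x _ => hf x
  have hgf : g k ≤ f k := indicator_le_self' (fun x _ => hf x) k
  have hQ := neg_two_norm_mul_le_Qop l1 l2 hg (hfi.indicator measurableSet_ball) hM k
  have hR1 : ‖k‖ * g k ≤ R * g k := by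
    simpa only [pow_one] using norm_pow_mul_indicator_ball_le (R := R) (hf k) 1
  have hR2 : ‖k‖ ^ 2 * g k ≤ R ^ 2 * g k := norm_pow_mul_indicator_ball_le (hf k) 2
  have hstep : -((2 * R + 2 * ν * R ^ 2) * f k) ≤ Qop l1 l2 g k - 2 * ν * ‖k‖ ^ 2 * g k := by
    have : 0 ≤ 2 * R + 2 * ν * R ^ 2 := by positivity
    nlinarith [mul_le_mul_of_nonneg_left hR2 hν.le, mul_le_mul_of_nonneg_left hgf this]
  have hhR : h * (2 * R + 2 * ν * R ^ 2) ≤ 1 := by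
    rw [lt_div_iff₀ (by positivity)] at hh
    nlinarith
  nlinarith [mul_le_mul_of_nonneg_left hstep hh0.le, hf k]

/-- Positivity of the explicit Euler step for truncated data: for ν, R > 0,
f ≥ 0 integrable with 𝔐₀[f·χ_R] > 0, setting f_R = χ_R·f, for every
0 < h < 1/(2(4R + 2νR²)) the function w_R = f + h(Q[f_R] − 2ν|k|²f_R) is nonnegative. -/
theorem euler_step_positivity {d : ℕ} (hd : 2 ≤ d) (l1 l2 ν R : ℝ) (hl1 : 0 < l1)
    (hl2 : 0 < l2) (hν : 0 < ν) (hR : 0 < R) (f : Sp d → ℝ) (hf : ∀ k, 0 ≤ f k)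
    (hfi : Integrable f)
    (hM : 0 < M0 (Set.indicator (Metric.ball (0 : Sp d) R) f))
    (h : ℝ) (hh0 : 0 < h) (hh : h < 1 / (2 * (4 * R + 2 * ν * R ^ 2))) :
    ∀ k : Sp d,
      0 ≤ f k + h * (Qop l1 l2 (Set.indicator (Metric.ball (0 : Sp d) R) f) k -
        2 * ν * ‖k‖ ^ 2 * Set.indicator (Metric.ball (0 : Sp d) R) f k) :=
  euler_step_positivity_general l1 l2 ν R hν hR f hf hfi hM h hh0 hh
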